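/- arXiv:1512.01828 — 2 statements merged into one kernel-verified Lean document; each statement's English description precedes it below -/
import Mathlib

section
/- Let n ≥ 1. For every binary string K = (k₁,…,kₙ) ∈ {0,1}ⁿ, the operator C_K = c_{kₙ} ⋯ c_{k₂} c_{k₁} equals the rank-one matrix |0…0⟩⟨k₁…kₙ| (the matrix whose only nonzero entry is a 1 in row (0,…,0), column K); in particular C_K is a rank-one partial isometry mapping |k₁…kₙ⟩ to |0…0⟩ and annihilating all other standard basis vectors. -/
/-!
Read as a matrix, the partial product `c_{k_m} ⋯ c_{k_1}` has entry `1` at `(J, L)` exactly when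
`J` vanishes and `L` agrees with `K` on the first `m` modes while `J` and `L` agree on the
remaining ones, and `0` elsewhere. Multiplying by `c_{k_{m+1}}` preserves this shape: `aa†` keeps
the rows with `j_{m+1} = 0`, and `a` lowers bit `m + 1` of the column with the Jordan–Wigner sign
`(−1)^{j₁+⋯+j_m}`, which is `1` because those bits of the row are already `0`. At `m = n` only the
entry `(0…0, K)` survives.
-/

open Matrix Polynomial

/-- Binary strings of length `n`, indexing the `2^n`-dimensional Fock space. -/
abbrev Idx (n : ℕ) := Fin n → Fin 2

/-- Jordan–Wigner creation matrix `aₜ†` for mode `t`: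
`aₜ†|j₁…jₙ⟩ = (−1)^{j₁+⋯+j_{t−1}} |j₁…j_{t−1} 1 j_{t+1}…jₙ⟩` if `jₜ = 0`, and `0` if `jₜ = 1`. -/
noncomputable def adag (n : ℕ) (t : Fin n) : Matrix (Idx n) (Idx n) ℂ :=
  Matrix.of fun J K =>
    if K t = 0 ∧ J = Function.update K t 1
    then (-1 : ℂ) ^ (∑ s ∈ Finset.univ.filter (fun s => s < t), (K s : ℕ))
    else 0

/-- Jordan–Wigner annihilation matrix `aₜ`, the conjugate transpose of `aₜ†`. -/
noncomputable def ann (n : ℕ) (t : Fin n) : Matrix (Idx n) (Idx n) ℂ := (adag n t)ᴴ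

/-- `c_{jₛ}† = aₛaₛ†` if `jₛ = 0` and `aₛ†` if `jₛ = 1`. -/
noncomputable def cdag (n : ℕ) (s : Fin n) (j : Fin 2) : Matrix (Idx n) (Idx n) ℂ :=
  if j = 0 then ann n s * adag n s else adag n s

/-- `c_{kₛ} = aₛaₛ†` if `kₛ = 0` and `aₛ` if `kₛ = 1`. -/
noncomputable def cann (n : ℕ) (s : Fin n) (k : Fin 2) : Matrix (Idx n) (Idx n) ℂ :=
  if k = 0 then ann n s * adag n s else ann n s

/-- `A_{JK} = c_{j₁}† c_{j₂}† ⋯ c_{jₙ}† c_{kₙ} ⋯ c_{k₂} c_{k₁}`. -/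
noncomputable def AJK (n : ℕ) (J K : Idx n) : Matrix (Idx n) (Idx n) ℂ :=
  (((List.finRange n).map fun s => cdag n s (J s)).prod) *
  ((((List.finRange n).reverse).map fun s => cann n s (K s)).prod)

/-- `C_K = c_{kₙ} ⋯ c_{k₂} c_{k₁}`. -/
noncomputable def CK (n : ℕ) (K : Idx n) : Matrix (Idx n) (Idx n) ℂ :=
  (((List.finRange n).reverse).map fun s => cann n s (K s)).prod

lemma Function.update_eq_update_iff_of_apply_eq {α β : Type*} [DecidableEq α] {f g : α → β}
    {a : α} (b : β) (h : f a = g a) : Function.update f a b = Function.update g a b ↔ f = g := by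
  refine ⟨fun hfg => ?_, fun hfg => hfg ▸ rfl⟩
  rw [← Function.update_eq_self a f, ← Function.update_eq_self a g, h]
  simpa using congrArg (Function.update · a (g a)) hfg

lemma List.prod_reverse_take_succ {M : Type*} [Monoid M] (l : List M) (i : ℕ) (h : i < l.length) :
    (l.take (i + 1)).reverse.prod = l[i] * (l.take i).reverse.prod := by
  rw [← List.take_concat_get' _ _ h, List.reverse_concat', List.prod_cons]

noncomputable def jwSign {n : ℕ} (t : Fin n) (J : Idx n) : ℂ :=
  (-1 : ℂ) ^ (∑ s ∈ Finset.univ.filter (fun s => s < t), (J s : ℕ))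

section JordanWigner

variable {n : ℕ}

lemma jwSign_mul_self (t : Fin n) (J : Idx n) : jwSign t J * jwSign t J = 1 := by
  rw [jwSign, ← pow_add]
  exact Even.neg_one_pow ⟨_, rfl⟩

lemma jwSign_eq_one {t : Fin n} {J : Idx n} (h : ∀ s < t, J s = 0) : jwSign t J = 1 := by
  rw [jwSign, Finset.sum_eq_zero fun s hs => by simp [h s (Finset.mem_filter.mp hs).2], pow_zero]

lemma adag_apply (t : Fin n) (J K : Idx n) :
    adag n t J K = if K t = 0 ∧ J = Function.update K t 1 then jwSign t K else 0 := rfl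

lemma ann_apply (t : Fin n) (J K : Idx n) :
    ann n t J K = if J t = 0 ∧ K = Function.update J t 1 then jwSign t J else 0 := by
  rw [ann, conjTranspose_apply, adag_apply]
  split_ifs <;> simp [jwSign]

lemma ann_mul_apply (t : Fin n) (M : Matrix (Idx n) (Idx n) ℂ) (J L : Idx n) :
    (ann n t * M) J L = if J t = 0 then jwSign t J * M (Function.update J t 1) L else 0 := by
  simp only [mul_apply, ann_apply, ite_mul, zero_mul]
  split_ifs with hJ <;> simp [hJ]

lemma ann_mul_adag (t : Fin n) :
    ann n t * adag n t = diagonal fun J => if J t = 0 then 1 else 0 := by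
  ext J L
  rw [ann_mul_apply, adag_apply, diagonal_apply]
  by_cases hJ : J t = 0
  · by_cases hJL : J = L
    · subst hJL; simp [hJ, jwSign_mul_self]
    · have : ¬ (L t = 0 ∧ Function.update J t 1 = Function.update L t 1) :=
        fun h => hJL ((Function.update_eq_update_iff_of_apply_eq 1 (hJ.trans h.1.symm)).mp h.2)
      simp [hJ, hJL, this]
  · simp [hJ]

end JordanWigner

section PartialProducts

variable {n : ℕ} (K : Idx n)

def PrefixMatch (m : ℕ) (J L : Idx n) : Prop :=
  (∀ s : Fin n, (s : ℕ) < m → J s = 0 ∧ L s = K s) ∧ ∀ s : Fin n, m ≤ (s : ℕ) → J s = L s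

instance (m : ℕ) (J L : Idx n) : Decidable (PrefixMatch K m J L) := by
  unfold PrefixMatch; infer_instance

noncomputable def prefixMatrix (m : ℕ) : Matrix (Idx n) (Idx n) ℂ :=
  of fun J L => if PrefixMatch K m J L then 1 else 0

variable {K}

lemma prefixMatch_zero_iff {J L : Idx n} : PrefixMatch K 0 J L ↔ J = L := by
  simp [PrefixMatch, funext_iff]

lemma prefixMatch_full_iff {J L : Idx n} : PrefixMatch K n J L ↔ J = 0 ∧ L = K := by
  simp +contextual [PrefixMatch, funext_iff, forall_and]

lemma prefixMatrix_apply (m : ℕ) (J L : Idx n) :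
    prefixMatrix K m J L = if PrefixMatch K m J L then 1 else 0 := rfl

lemma prefixMatch_succ_iff (t : Fin n) {J L : Idx n} :
    PrefixMatch K (t + 1) J L ↔ J t = 0 ∧ PrefixMatch K t (Function.update J t (K t)) L := by
  have update_of_ne {s : Fin n} (h : (s : ℕ) ≠ t) (x : Fin 2) : Function.update J t x s = J s :=
    Function.update_of_ne (fun h' => h (congrArg Fin.val h')) _ _
  constructor
  · rintro ⟨hlt, hge⟩
    refine ⟨(hlt t (by omega)).1, fun s h => ?_, fun s h => ?_⟩
    · rw [update_of_ne h.ne]; exact hlt s (by omega)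
    · rcases h.eq_or_lt with h | h
      · obtain rfl : s = t := Fin.ext h.symm
        rw [Function.update_self, (hlt s (by omega)).2]
      · rw [update_of_ne h.ne']; exact hge s h
  · rintro ⟨h0, hlt, hge⟩
    refine ⟨fun s h => ?_, fun s h => ?_⟩
    · rcases (Nat.lt_succ_iff_lt_or_eq.mp h) with h | h
      · simpa [update_of_ne h.ne] using hlt s h
      · obtain rfl : s = t := Fin.ext h
        simpa [eq_comm] using And.intro h0 (hge s le_rfl)
    · simpa [update_of_ne (show (s : ℕ) ≠ t by omega)] using hge s (by omega)

lemma cann_mul_prefixMatrix (t : Fin n) :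
    cann n t (K t) * prefixMatrix K t = prefixMatrix K (t + 1) := by
  ext J L
  simp only [prefixMatrix_apply (t + 1), prefixMatch_succ_iff]
  obtain hK | hK : K t = 0 ∨ K t = 1 := by omega
  · rw [cann, if_pos hK, ann_mul_adag, diagonal_mul, prefixMatrix_apply, hK]
    by_cases hJ : J t = 0
    · rw [← hJ, Function.update_eq_self]
      simp
    · simp [hJ]
  · rw [cann, if_neg (by simp [hK]), ann_mul_apply, prefixMatrix_apply, hK]
    by_cases hJ : J t = 0
    · by_cases hP : PrefixMatch K t (Function.update J t 1) L
      · have hsign : jwSign t J = 1 := jwSign_eq_one fun s hs => by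
          simpa [Function.update_of_ne hs.ne] using (hP.1 s hs).1
        simp [hP, hJ, hsign]
      · simp [hP]
    · simp [hJ]

lemma prod_take_cann_eq_prefixMatrix {m : ℕ} (hm : m ≤ n) :
    (((List.finRange n).map fun s => cann n s (K s)).take m).reverse.prod = prefixMatrix K m := by
  induction m with
  | zero =>
    ext J L
    simp [prefixMatrix_apply, prefixMatch_zero_iff, one_apply]
  | succ m ih =>
    rw [List.prod_reverse_take_succ _ _ (by simpa using hm), ih (by omega)]
    simpa using cann_mul_prefixMatrix (K := K) ⟨m, hm⟩

lemma CK_eq_prefixMatrix : CK n K = prefixMatrix K n := by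
  rw [CK, List.map_reverse, ← prod_take_cann_eq_prefixMatrix le_rfl,
    List.take_of_length_le (by simp)]

lemma prefixMatrix_full : prefixMatrix K n = single 0 K 1 := by
  ext J L
  simp [prefixMatrix_apply, prefixMatch_full_iff, single_apply, eq_comm]

end PartialProducts

theorem CK_eq_stdBasisMatrix_general (n : ℕ) (K : Idx n) :
    CK n K = Matrix.single (fun _ => 0) K 1 ∧
    CK n K *ᵥ (fun J => if J = K then (1 : ℂ) else 0) =
      (fun J => if J = (fun _ => (0 : Fin 2)) then (1 : ℂ) else 0) ∧
    ∀ J : Idx n, J ≠ K → CK n K *ᵥ (fun J' => if J' = J then (1 : ℂ) else 0) = 0 := by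
  have hCK : CK n K = Matrix.single (fun _ => 0) K 1 := CK_eq_prefixMatrix.trans prefixMatrix_full
  refine ⟨hCK, ?_, fun J hJ => ?_⟩
  · ext J
    simp [hCK, single_mulVec, Function.update_apply]
  · ext J'
    simp [hCK, single_mulVec, hJ.symm]

/-- `C_K` equals the rank-one matrix `|0…0⟩⟨k₁…kₙ|`; in particular it is a
rank-one partial isometry mapping `|K⟩` to `|0…0⟩` and annihilating the other basis vectors. -/
theorem CK_eq_stdBasisMatrix (n : ℕ) (hn : 1 ≤ n) (K : Idx n) :
    CK n K = Matrix.single (fun _ => 0) K 1 ∧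
    CK n K *ᵥ (fun J => if J = K then (1 : ℂ) else 0) =
      (fun J => if J = (fun _ => (0 : Fin 2)) then (1 : ℂ) else 0) ∧
    ∀ J : Idx n, J ≠ K → CK n K *ᵥ (fun J' => if J' = J then (1 : ℂ) else 0) = 0 :=
  CK_eq_stdBasisMatrix_general n K
end

section
/- Let n ≥ 1. A 2^n × 2^n complex matrix ρ is positive semidefinite with trace 1 (i.e., is a valid density operator) if and only if ρ can be represented as ρ = Σ_{J,K ∈ {0,1}ⁿ} λ_{JK} A_{JK}, where the 2^n × 2^n coefficient matrix (λ_{JK}) is positive semidefinite and satisfies Σ_J λ_{JJ} = 1. -/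
open Matrix Polynomial
open scoped ComplexOrder

lemma cann_eq (n : ℕ) (s : Fin n) (k : Fin 2) : cann n s k = (cdag n s k)ᴴ := by
  unfold cann cdag ann
  split <;> simp [Matrix.conjTranspose_mul]

lemma update_eq_update_iff {n : ℕ} {M K : Idx n} {s : Fin n} (hM : M s = 0) (hK : K s = 0) :
    Function.update M s 1 = Function.update K s 1 ↔ M = K := by
  constructor
  · intro h
    funext t
    by_cases ht : t = s
    · subst ht; rw [hM, hK]
    · have := congrFun h t
      simpa [Function.update, ht] using this
  · rintro rfl; rfl

lemma proj_eq (n : ℕ) (s : Fin n) :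
    ann n s * adag n s =
      Matrix.of (fun M K => if M = K ∧ M s = 0 then (1 : ℂ) else 0) := by
  ext M K
  rw [Matrix.mul_apply]
  simp only [ann, Matrix.conjTranspose_apply, adag, Matrix.of_apply]
  by_cases hM : M s = 0
  · by_cases hK : K s = 0
    · by_cases hMK : M = K
      · subst hMK
        rw [Finset.sum_eq_single (Function.update M s 1)]
        · simp only [hM, true_and, if_pos rfl, if_true, star_pow, star_neg, star_one,
            ← pow_add, ← two_mul, pow_mul, neg_one_sq, one_pow]
        · intro X _ hX
          simp [hX, hM]
        · simp
      · rw [Finset.sum_eq_zero, if_neg (by tauto)]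
        intro X _
        by_cases h1 : X = Function.update M s 1
        · have h2 : X ≠ Function.update K s 1 := by
            rw [h1, Ne, update_eq_update_iff hM hK]; exact hMK
          simp [h2]
        · simp [h1]
    · rw [Finset.sum_eq_zero, if_neg (by rintro ⟨rfl, h⟩; exact hK h)]
      intro X _; simp [hK]
  · rw [Finset.sum_eq_zero, if_neg (by tauto)]
    intro X _; simp [hM]

lemma prod_cdag (n : ℕ) (J : Idx n) :
    ∀ L : List (Fin n), L.Pairwise (· < ·) →
    ((L.map fun s => cdag n s (J s)).prod =
    Matrix.of (fun M K =>
      if (∀ s ∈ L, K s = 0) ∧ M = (fun t => if t ∈ L then J t else K t)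
      then (L.map fun s => if J s = 0 then (1:ℂ)
            else (-1:ℂ) ^ (∑ u ∈ Finset.univ.filter (fun u => u < s), (K u : ℕ))).prod
      else 0)) := by
  intro L
  induction L with
  | nil =>
    intro _
    ext M K
    simp [Matrix.one_apply, eq_comm]
  | cons a L' ih =>
    intro hs
    rw [List.pairwise_cons] at hs
    obtain ⟨ha, hs'⟩ := hs
    have haL' : a ∉ L' := fun h => lt_irrefl a (ha a h)
    simp only [List.map_cons, List.prod_cons, ih hs']
    ext M K
    simp only [Matrix.mul_apply, Matrix.of_apply, List.mem_cons]
    set f : Idx n := fun t => if t ∈ L' then J t else K t with hf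
    set v : ℂ := (L'.map fun s => if J s = 0 then (1:ℂ)
            else (-1:ℂ) ^ (∑ u ∈ Finset.univ.filter (fun u => u < s), (K u : ℕ))).prod with hv
    by_cases h0 : ∀ s ∈ L', K s = 0
    · have hsum : (∑ X, cdag n a (J a) M X *
          (if (∀ s ∈ L', K s = 0) ∧ X = f then v else 0)) = cdag n a (J a) M f * v := by
        rw [Finset.sum_eq_single f]
        · rw [if_pos ⟨h0, rfl⟩]
        · intro X _ hX
          simp [hX]
        · simp
      rw [hsum]
      have hfa : f a = K a := by simp [hf, haL']
      have hflt : ∀ u : Fin n, u < a → f u = K u := by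
        intro u hu
        have : u ∉ L' := fun h => absurd (ha u h) (not_lt.mpr hu.le)
        simp [hf, this]
      have hJa : J a = 0 ∨ J a = 1 := by omega
      rcases hJa with hJ | hJ
      · -- projector case
        rw [cdag, if_pos hJ, proj_eq]
        simp only [Matrix.of_apply, List.map_cons, List.prod_cons, hJ, if_true, ← hv]
        by_cases hKa : K a = 0
        · have hcond : ∀ s : Fin n, s = a ∨ s ∈ L' → K s = 0 := by
            rintro s (rfl | h)
            exacts [hKa, h0 s h]
          have hfg : f = fun t => if t = a ∨ t ∈ L' then J t else K t := by
            funext t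
            rcases eq_or_ne t a with rfl | ht
            · simp [hf, haL', hKa, hJ]
            · by_cases ht' : t ∈ L' <;> simp [hf, ht, ht']
          rw [← hfg]
          by_cases hMf : M = f
          · have hMa : M a = 0 := by rw [hMf, hfa]; exact hKa
            rw [if_pos ⟨hMf, hMa⟩, if_pos ⟨hcond, hMf⟩]
          · rw [if_neg (by rintro ⟨h, -⟩; exact hMf h),
              if_neg (by rintro ⟨-, h⟩; exact hMf h), zero_mul]
        · have hnc : ¬ ((∀ s : Fin n, s = a ∨ s ∈ L' → K s = 0) ∧
              M = fun t => if t = a ∨ t ∈ L' then J t else K t) := by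
            rintro ⟨h, -⟩
            exact hKa (h a (Or.inl rfl))
          rw [if_neg hnc]
          have hnc2 : ¬ (M = f ∧ M a = 0) := by
            rintro ⟨rfl, h⟩
            exact hKa (by rw [← hfa]; exact h)
          simp [hnc2]
      · -- creation case
        rw [cdag, if_neg (by simp [hJ]), adag]
        simp only [Matrix.of_apply, List.map_cons, List.prod_cons, hJ, hfa, ← hv]
        have hsgn : (∑ u ∈ Finset.univ.filter (fun u => u < a), (f u : ℕ))
            = ∑ u ∈ Finset.univ.filter (fun u => u < a), (K u : ℕ) := by
          refine Finset.sum_congr rfl fun u hu => ?_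
          rw [hflt u (Finset.mem_filter.mp hu).2]
        by_cases hKa : K a = 0
        · have hcond : ∀ s : Fin n, s = a ∨ s ∈ L' → K s = 0 := by
            rintro s (rfl | h)
            exacts [hKa, h0 s h]
          have hupd : Function.update f a 1 = fun t => if t = a ∨ t ∈ L' then J t else K t := by
            funext t
            rcases eq_or_ne t a with rfl | ht
            · simp [Function.update, hJ]
            · by_cases ht' : t ∈ L' <;> simp [Function.update, hf, ht, ht']
          rw [hupd, hsgn]
          by_cases hMf : M = fun t => if t = a ∨ t ∈ L' then J t else K t
          · rw [if_pos ⟨hKa, hMf⟩, if_pos ⟨hcond, hMf⟩,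
              if_neg (by decide : ¬ (1 : Fin 2) = 0)]
          · rw [if_neg (by rintro ⟨-, h⟩; exact hMf h),
              if_neg (by rintro ⟨-, h⟩; exact hMf h), zero_mul]
        · have hnc : ¬ ((∀ s : Fin n, s = a ∨ s ∈ L' → K s = 0) ∧
              M = fun t => if t = a ∨ t ∈ L' then J t else K t) := by
            rintro ⟨h, -⟩
            exact hKa (h a (Or.inl rfl))
          rw [if_neg hnc]
          simp [hKa]
    · have hnc : ¬ ((∀ s : Fin n, s = a ∨ s ∈ L' → K s = 0) ∧
          M = fun t => if t = a ∨ t ∈ L' then J t else K t) := by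
        rintro ⟨h, -⟩
        exact h0 fun s hsL => h s (Or.inr hsL)
      rw [if_neg hnc]
      refine Finset.sum_eq_zero fun X _ => ?_
      simp [h0]

lemma D_eq (n : ℕ) (J : Idx n) :
    ((List.finRange n).map fun s => cdag n s (J s)).prod =
      Matrix.single J (fun _ => 0) 1 := by
  rw [prod_cdag n J _ (List.pairwise_lt_finRange n)]
  ext M K
  simp only [Matrix.of_apply, Matrix.single, List.mem_finRange, if_true]
  by_cases hK : K = fun _ => 0
  · subst hK
    by_cases hM : M = J
    · subst hM
      rw [if_pos ⟨fun _ _ => rfl, rfl⟩, if_pos ⟨rfl, rfl⟩]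
      refine List.prod_eq_one fun x hx => ?_
      simp only [List.mem_map] at hx
      obtain ⟨s, -, rfl⟩ := hx
      simp
    · rw [if_neg, if_neg]
      · rintro ⟨rfl, -⟩; exact hM rfl
      · rintro ⟨-, h⟩; exact hM h
  · rw [if_neg, if_neg]
    · rintro ⟨-, rfl⟩; exact hK rfl
    · rintro ⟨h, -⟩
      exact hK (funext fun s => h s trivial)

lemma AJK_eq (n : ℕ) (J K : Idx n) :
    AJK n J K = Matrix.single J K 1 := by
  have h2 : ((((List.finRange n).reverse).map fun s => cann n s (K s)).prod) =
      Matrix.single (fun _ => 0) K 1 := by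
    have : (((List.finRange n).reverse).map fun s => cann n s (K s)) =
        (((List.finRange n).map fun s => cdag n s (K s)).map Matrix.conjTranspose).reverse := by
      rw [List.map_reverse, List.map_map]
      exact congrArg List.reverse
        (congrArg (fun h => List.map h (List.finRange n))
          (funext fun s => cann_eq n s (K s)))
    rw [this, ← Matrix.conjTranspose_list_prod, D_eq]
    ext M L
    simp only [Matrix.conjTranspose_apply, Matrix.single, Matrix.of_apply]
    split_ifs with h1 h2
    · simp
    · exact absurd ⟨h1.2, h1.1⟩ h2
    · next h => exact absurd ⟨h.2, h.1⟩ h1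
    · simp
  rw [AJK, D_eq, h2, Matrix.single_mul_single_same, one_mul]

lemma sum_smul_AJK (n : ℕ) (lam : Matrix (Idx n) (Idx n) ℂ) :
    ∑ J, ∑ K, lam J K • AJK n J K = lam := by
  conv_rhs => rw [Matrix.matrix_eq_sum_single lam]
  refine Finset.sum_congr rfl fun J _ => Finset.sum_congr rfl fun K _ => ?_
  rw [AJK_eq, Matrix.smul_single, smul_eq_mul, mul_one]

/-- A `2^n × 2^n` complex matrix `ρ` is positive semidefinite with trace 1
iff it can be represented as `ρ = Σ_{J,K} λ_{JK} A_{JK}` with `(λ_{JK})` a positive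
semidefinite matrix satisfying `Σ_J λ_{JJ} = 1`. -/
theorem density_iff_AJK_representation (n : ℕ) (hn : 1 ≤ n)
    (ρ : Matrix (Idx n) (Idx n) ℂ) :
    (ρ.PosSemidef ∧ ρ.trace = 1) ↔
      ∃ lam : Matrix (Idx n) (Idx n) ℂ,
        lam.PosSemidef ∧ (∑ J, lam J J) = 1 ∧
        ρ = ∑ J, ∑ K, lam J K • AJK n J K := by
  constructor
  · rintro ⟨hpsd, htr⟩
    exact ⟨ρ, hpsd, by simpa [Matrix.trace, Matrix.diag] using htr, (sum_smul_AJK n ρ).symm⟩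
  · rintro ⟨lam, hpsd, htr, rfl⟩
    rw [sum_smul_AJK]
    exact ⟨hpsd, by simpa [Matrix.trace, Matrix.diag] using htr⟩
end
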